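/- Let A be a symmetric p×p real matrix with spectral decomposition A = Σ_j v_j γ_j γ_jᵀ (eigenvalues v_j, orthonormal eigenvectors γ_j), and let ε > 0. Then the matrix Ã = Σ_j max(v_j, ε) γ_j γ_jᵀ is symmetric positive definite, and Ã minimizes ‖A − Q‖_F² over all symmetric matrices Q with Q − εI positive semidefinite. -/

import Mathlib

open scoped BigOperators

/-- Squared Frobenius norm of a real matrix. -/
noncomputable def frobSq {p : ℕ} (A : Matrix (Fin p) (Fin p) ℝ) : ℝ :=
  ∑ i, ∑ j, A i j ^ 2

/-!
Let `G` be the orthogonal matrix with columns `γ j`, so that `A = G diag(v) Gᵀ` and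
`Ã = G diag(max v ε) Gᵀ`. Conjugation by `G` preserves the Frobenius norm and the constraint
`Q ⪰ εI`, so it suffices to treat `A = diag(v)`. There every feasible `R` has `R j j ≥ ε`, and
dropping the off-diagonal entries of `diag(v) - R` gives
`‖diag(v) - R‖² ≥ ∑ (v j - R j j)² ≥ ∑ (v j - max (v j) ε)²`,
the last step because `max (v j) ε` is the point of `[ε, ∞)` closest to `v j`.
-/

open Matrix

lemma sq_sub_max_le_sq_sub {v ε r : ℝ} (hr : ε ≤ r) : (v - max v ε) ^ 2 ≤ (v - r) ^ 2 := by
  rcases le_total v ε with h | h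
  · rw [max_eq_right h]; nlinarith
  · rw [max_eq_left h]; nlinarith

lemma transpose_mul_self_of_orthonormal {m n : Type*} [Fintype n] [DecidableEq m]
    {γ : m → EuclideanSpace ℝ n} (hγ : Orthonormal ℝ γ) :
    (of fun i j => γ j i)ᵀ * of (fun i j => γ j i) = 1 := by
  ext j k
  have := orthonormal_iff_ite.mp hγ j k
  simp only [PiLp.inner_apply, RCLike.inner_apply, starRingEnd_apply, star_trivial] at this
  simpa [mul_apply, one_apply, mul_comm] using this

lemma sum_smul_vecMulVec_eq_mul_diagonal_mul {m n : Type*} [Fintype m] [DecidableEq m]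
    (γ : m → EuclideanSpace ℝ n) (w : m → ℝ) :
    ∑ j, w j • vecMulVec (γ j) (γ j) =
      of (fun i j => γ j i) * diagonal w * (of fun i j => γ j i)ᵀ := by
  ext i k
  simp only [Matrix.sum_apply, Matrix.smul_apply, vecMulVec_apply, smul_eq_mul, mul_apply,
    transpose_apply, of_apply]
  refine Finset.sum_congr rfl fun j _ => ?_
  rw [Finset.sum_eq_single j (fun b _ hb => by simp [diagonal_apply_ne _ hb]) (by simp),
    diagonal_apply_eq]
  ring

lemma posSemidef_mul_diagonal_mul_transpose_sub_smul_one {m n : Type*} [Fintype m] [Fintype n]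
    [DecidableEq m] [DecidableEq n] {G : Matrix n m ℝ} (hG : G * Gᵀ = 1)
    {d : m → ℝ} {c : ℝ} (hd : ∀ j, c ≤ d j) :
    (G * diagonal d * Gᵀ - c • 1).PosSemidef := by
  have hconj : G * diagonal d * Gᵀ - c • 1 = G * diagonal (fun j => d j - c) * Gᵀ := by
    rw [← diagonal_sub, ← smul_one_eq_diagonal, Matrix.mul_sub, Matrix.sub_mul, Matrix.mul_smul,
      Matrix.mul_one, Matrix.smul_mul, hG]
  rw [hconj, ← conjTranspose_eq_transpose_of_trivial]
  exact (posSemidef_diagonal_iff.mpr fun j => sub_nonneg.mpr (hd j)).mul_mul_conjTranspose_same G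

lemma Matrix.PosSemidef.transpose_mul_mul_sub_smul_one {m n : Type*} [Fintype m] [Fintype n]
    [DecidableEq m] [DecidableEq n] {Q : Matrix n n ℝ} {c : ℝ}
    (hQ : (Q - c • 1).PosSemidef) {G : Matrix n m ℝ} (hG : Gᵀ * G = 1) :
    (Gᵀ * Q * G - c • 1).PosSemidef := by
  have hconj : Gᵀ * (Q - c • 1) * G = Gᵀ * Q * G - c • 1 := by
    rw [Matrix.mul_sub, Matrix.sub_mul, Matrix.mul_smul, Matrix.mul_one, Matrix.smul_mul, hG]
  rw [← hconj, ← conjTranspose_eq_transpose_of_trivial]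
  exact hQ.conjTranspose_mul_mul_same G

lemma Matrix.PosSemidef.le_diag_of_sub_smul_one {n : Type*} [DecidableEq n] {R : Matrix n n ℝ}
    {c : ℝ} (hR : (R - c • 1).PosSemidef) (j : n) : c ≤ R j j := by
  simpa using hR.diag_nonneg (i := j)

section Frobenius

variable {p : ℕ}

lemma frobSq_eq_trace (M : Matrix (Fin p) (Fin p) ℝ) : frobSq M = (Mᵀ * M).trace := by
  simp only [frobSq, trace, diag, mul_apply, transpose_apply, sq]
  exact Finset.sum_comm

lemma frobSq_mul_mul_transpose {G : Matrix (Fin p) (Fin p) ℝ} (hG : Gᵀ * G = 1)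
    (X : Matrix (Fin p) (Fin p) ℝ) : frobSq (G * X * Gᵀ) = frobSq X := by
  have hsq : (G * X * Gᵀ)ᵀ * (G * X * Gᵀ) = G * (Xᵀ * X) * Gᵀ := by
    simp only [transpose_mul, transpose_transpose, Matrix.mul_assoc]
    rw [← Matrix.mul_assoc Gᵀ G, hG, Matrix.one_mul]
  rw [frobSq_eq_trace, frobSq_eq_trace, hsq, Matrix.mul_assoc, trace_mul_comm, Matrix.mul_assoc,
    hG, Matrix.mul_one]

lemma frobSq_diagonal (d : Fin p → ℝ) : frobSq (diagonal d) = ∑ j, d j ^ 2 := by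
  simp [frobSq, diagonal_apply, apply_ite (· ^ 2 : ℝ → ℝ)]

lemma sum_diag_sq_le_frobSq (M : Matrix (Fin p) (Fin p) ℝ) : ∑ j, M j j ^ 2 ≤ frobSq M :=
  Finset.sum_le_sum fun i _ =>
    Finset.single_le_sum (f := fun j => M i j ^ 2) (fun _ _ => sq_nonneg _) (Finset.mem_univ i)

lemma frobSq_diagonal_sub_truncation_le (v : Fin p → ℝ) {ε : ℝ} {R : Matrix (Fin p) (Fin p) ℝ}
    (hR : ∀ j, ε ≤ R j j) :
    frobSq (diagonal fun j => v j - max (v j) ε) ≤ frobSq (diagonal v - R) :=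
  calc frobSq (diagonal fun j => v j - max (v j) ε)
      = ∑ j, (v j - max (v j) ε) ^ 2 := frobSq_diagonal _
    _ ≤ ∑ j, (v j - R j j) ^ 2 := Finset.sum_le_sum fun j _ => sq_sub_max_le_sq_sub (hR j)
    _ = ∑ j, (diagonal v - R) j j ^ 2 := by simp
    _ ≤ frobSq (diagonal v - R) := sum_diag_sq_le_frobSq _

end Frobenius

theorem eigenvalue_truncation_projection_general {p : ℕ} (A : Matrix (Fin p) (Fin p) ℝ)
    (v : Fin p → ℝ) (γ : Fin p → EuclideanSpace ℝ (Fin p))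
    (hortho : Orthonormal ℝ γ)
    (hdecomp : A = ∑ j, v j • Matrix.of (fun i k => γ j i * γ j k))
    (ε : ℝ) (hε : 0 < ε) :
    let Atilde : Matrix (Fin p) (Fin p) ℝ :=
      ∑ j, max (v j) ε • Matrix.of (fun i k => γ j i * γ j k)
    Atilde.IsSymm ∧ Atilde.PosDef ∧
      (Atilde - ε • (1 : Matrix (Fin p) (Fin p) ℝ)).PosSemidef ∧
      (∀ Q : Matrix (Fin p) (Fin p) ℝ, Q.IsSymm →
        (Q - ε • (1 : Matrix (Fin p) (Fin p) ℝ)).PosSemidef →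
        frobSq (A - Atilde) ≤ frobSq (A - Q)) := by
  intro Atilde
  set G : Matrix (Fin p) (Fin p) ℝ := of fun i j => γ j i
  have hGtG : Gᵀ * G = 1 := transpose_mul_self_of_orthonormal hortho
  have hGGt : G * Gᵀ = 1 := mul_eq_one_comm.mp hGtG
  have hA : A = G * diagonal v * Gᵀ := hdecomp.trans (sum_smul_vecMulVec_eq_mul_diagonal_mul γ v)
  have hAtilde : Atilde = G * diagonal (fun j => max (v j) ε) * Gᵀ :=
    sum_smul_vecMulVec_eq_mul_diagonal_mul γ _
  have hpsd : (Atilde - ε • 1).PosSemidef := by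
    rw [hAtilde]
    exact posSemidef_mul_diagonal_mul_transpose_sub_smul_one hGGt fun j => le_max_right _ _
  have hpd : Atilde.PosDef := by
    simpa using PosDef.posSemidef_add hpsd (PosDef.one.smul hε)
  refine ⟨isHermitian_iff_isSymm.mp hpd.isHermitian, hpd, hpsd, fun Q _ hQ => ?_⟩
  have hQG : Q = G * (Gᵀ * Q * G) * Gᵀ := by
    simp only [← Matrix.mul_assoc, hGGt, Matrix.one_mul]
    rw [Matrix.mul_assoc, hGGt, Matrix.mul_one]
  rw [hA, hAtilde, ← sub_mul, ← mul_sub, diagonal_sub, hQG, ← sub_mul, ← mul_sub,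
    frobSq_mul_mul_transpose hGtG, frobSq_mul_mul_transpose hGtG]
  exact frobSq_diagonal_sub_truncation_le v
    (hQ.transpose_mul_mul_sub_smul_one hGtG).le_diag_of_sub_smul_one

theorem eigenvalue_truncation_projection {p : ℕ} (A : Matrix (Fin p) (Fin p) ℝ)
    (hA : A.IsSymm) (v : Fin p → ℝ) (γ : Fin p → EuclideanSpace ℝ (Fin p))
    (hortho : Orthonormal ℝ γ)
    (hdecomp : A = ∑ j, v j • Matrix.of (fun i k => γ j i * γ j k))
    (ε : ℝ) (hε : 0 < ε) :
    let Atilde : Matrix (Fin p) (Fin p) ℝ :=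
      ∑ j, max (v j) ε • Matrix.of (fun i k => γ j i * γ j k)
    Atilde.IsSymm ∧ Atilde.PosDef ∧
      (Atilde - ε • (1 : Matrix (Fin p) (Fin p) ℝ)).PosSemidef ∧
      (∀ Q : Matrix (Fin p) (Fin p) ℝ, Q.IsSymm →
        (Q - ε • (1 : Matrix (Fin p) (Fin p) ℝ)).PosSemidef →
        frobSq (A - Atilde) ≤ frobSq (A - Q)) :=
  eigenvalue_truncation_projection_general A v γ hortho hdecomp ε hε
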